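/- Let f = Σ_α a_α X_α be an n-symbol with associated weights (b_α) and weighted shifts W_j^f on ℓ²(𝔽₊ⁿ). Then Σ_{α : |α| ≥ 1} a_α W_α^f (W_α^f)* = 1 − P_∅, where P_∅ is the orthogonal projection of ℓ²(𝔽₊ⁿ) onto the span of the basis vector e_∅ and the sum runs over the (finitely many) words α with a_α ≠ 0. -/

import Mathlib

/-!
The operator `W_α (W_α)*` is diagonal in the basis `(e_β)`: it kills `e_β` unless `α` is a prefix
of `β`, and it multiplies `e_{α·γ}` by `b_γ / b_{α·γ}`. So on `e_β` the left-hand side is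
`(Σ_{β = α·γ, α ≠ ∅} a_α b_γ / b_β) e_β`, which is `0` for `β = ∅` and `e_β` otherwise by the
recursion `b_β = Σ_{β = α·γ, α ≠ ∅} a_α b_γ`; that recursion comes from splitting off the first
factor of each factorization of `β`. Factorizations of a word into nonempty words are indexed
by the compositions of its length, which makes them a finite set.
-/

/-- Words over the alphabet `{1,…,n}`: the free monoid `𝔽₊ⁿ` (empty word `[]`,
concatenation `++`, word length `List.length`). -/
abbrev Word (n : ℕ) := List (Fin n)

/-- An `n`-symbol: a finitely supported family of real coefficients indexed by words,
vanishing at the empty word, nonnegative everywhere, and strictly positive at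
single-letter words. -/
structure NSymbol (n : ℕ) where
  a : Word n → ℝ
  finiteSupport : (Function.support a).Finite
  map_empty : a [] = 0
  nonneg : ∀ α : Word n, 0 ≤ a α
  pos_single : ∀ j : Fin n, 0 < a [j]

/-- The weight family `(b_α)` of an `n`-symbol: `b_∅ = 1` and, for a nonempty word `α`,
`b_α = Σ_{k=1}^{|α|} Σ_{α = γ₁⋯γ_k, γᵢ ≠ ∅} a_{γ₁}⋯a_{γ_k}`, i.e. the sum of
`a_{γ₁}⋯a_{γ_k}` over all factorizations of `α` into at least one nonempty word. -/
noncomputable def weight {n : ℕ} (f : NSymbol n) (α : Word n) : ℝ :=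
  if α = [] then 1
  else ∑ᶠ L ∈ {L : List (Word n) |
      L.flatten = α ∧ 1 ≤ L.length ∧ ∀ γ ∈ L, γ ≠ ([] : Word n)},
    (L.map f.a).prod

/-- The full Fock space `F(ℂⁿ)`, identified with `ℓ²(𝔽₊ⁿ)`. -/
noncomputable abbrev Fock (n : ℕ) := lp (fun _ : Word n => ℂ) 2

/-- The canonical orthonormal basis vector `e_α` of `ℓ²(𝔽₊ⁿ)`. -/
noncomputable def e {n : ℕ} (α : Word n) : Fock n := lp.single 2 α 1

/-- `T_α = T_{i₁}⋯T_{i_k}` for a word `α = i₁⋯i_k`, with `T_∅ = 1`. -/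
noncomputable def opWord {n : ℕ} {H : Type*} [NormedAddCommGroup H] [NormedSpace ℂ H]
    (T : Fin n → H →L[ℂ] H) (α : Word n) : H →L[ℂ] H :=
  (α.map T).prod


section Factorizations

variable {ι : Type*} [DecidableEq ι]

def factorizations (w : List ι) : Finset (List (List ι)) :=
  (Finset.univ : Finset (Composition w.length)).image w.splitWrtComposition

theorem mem_factorizations {w : List ι} {L : List (List ι)} :
    L ∈ factorizations w ↔ L.flatten = w ∧ ∀ γ ∈ L, γ ≠ [] := by
  simp only [factorizations, Finset.mem_image, Finset.mem_univ, true_and]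
  constructor
  · rintro ⟨c, rfl⟩
    exact ⟨w.flatten_splitWrtComposition c,
      fun γ hγ => List.ne_nil_of_length_pos (List.length_pos_of_mem_splitWrtComposition hγ)⟩
  · rintro ⟨rfl, hL⟩
    have hpos : ∀ {i}, i ∈ L.map List.length → 0 < i := by
      simp only [List.mem_map]
      rintro _ ⟨γ, hγ, rfl⟩
      exact List.length_pos_iff.mpr (hL γ hγ)
    exact ⟨⟨L.map List.length, hpos, (List.length_flatten ..).symm⟩,
      L.splitWrtComposition_flatten _ rfl⟩

theorem factorizations_nil : factorizations ([] : List ι) = {[]} := by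
  ext L
  simp only [mem_factorizations, List.flatten_eq_nil_iff, Finset.mem_singleton]
  refine ⟨fun ⟨hnil, hne⟩ => List.eq_nil_iff_forall_not_mem.mpr fun γ hγ => hne γ hγ (hnil γ hγ),
    by rintro rfl; simp⟩

theorem take_cons_mem_factorizations {w : List ι} {k : ℕ} (hk : k ∈ Finset.Icc 1 w.length)
    {L : List (List ι)} (hL : L ∈ factorizations (w.drop k)) :
    w.take k :: L ∈ factorizations w := by
  rw [mem_factorizations] at hL ⊢
  refine ⟨by rw [List.flatten_cons, hL.1, List.take_append_drop], ?_⟩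
  rintro γ (_ | ⟨_, hγ⟩)
  · rw [Finset.mem_Icc] at hk
    rw [← List.length_pos_iff, List.length_take]
    omega
  · exact hL.2 γ hγ

theorem sum_factorizations_eq_sum_take_cons {M : Type*} [AddCommMonoid M] {w : List ι} (hw : w ≠ [])
    (g : List (List ι) → M) :
    ∑ L ∈ factorizations w, g L =
      ∑ k ∈ Finset.Icc 1 w.length, ∑ L ∈ factorizations (w.drop k), g (w.take k :: L) := by
  rw [Finset.sum_sigma']
  symm
  refine (Finset.sum_nbij' (fun p => w.take p.1 :: p.2) (fun L => ⟨L.headI.length, L.tail⟩)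
    ?_ ?_ ?_ ?_ fun _ _ => rfl)
  · rintro ⟨k, L⟩ h
    rw [Finset.mem_sigma] at h
    exact take_cons_mem_factorizations h.1 h.2
  · rintro (_ | ⟨γ, L⟩) h <;> rw [mem_factorizations] at h
    · exact absurd h.1.symm hw
    · obtain ⟨rfl, hne⟩ := h
      refine Finset.mem_sigma.mpr
        ⟨Finset.mem_Icc.mpr ⟨List.length_pos_iff.mpr (hne γ List.mem_cons_self), by simp⟩, ?_⟩
      simp only [List.headI_cons, List.tail_cons, List.flatten_cons, List.drop_left]
      exact mem_factorizations.mpr ⟨rfl, fun δ hδ => hne δ (List.mem_cons_of_mem γ hδ)⟩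
  · rintro ⟨k, L⟩ h
    rw [Finset.mem_sigma, Finset.mem_Icc] at h
    simp [h.1.2]
  · rintro (_ | ⟨γ, L⟩) h <;> rw [mem_factorizations] at h
    · exact absurd h.1.symm hw
    · obtain ⟨rfl, -⟩ := h
      simp

end Factorizations

section Weight

variable {n : ℕ} (f : NSymbol n)

theorem weight_eq_sum_factorizations (w : Word n) :
    weight f w = ∑ L ∈ factorizations w, (L.map f.a).prod := by
  rcases eq_or_ne w [] with rfl | hw
  · simp [weight, factorizations_nil]
  · have hset : {L : List (Word n) | L.flatten = w ∧ 1 ≤ L.length ∧ ∀ γ ∈ L, γ ≠ []} =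
        ↑(factorizations w) := by
      ext L
      simp only [Set.mem_ofPred_eq, Finset.mem_coe, mem_factorizations]
      refine ⟨fun ⟨hL, _, hne⟩ => ⟨hL, hne⟩, fun ⟨hL, hne⟩ => ⟨hL, ?_, hne⟩⟩
      rw [Nat.one_le_iff_ne_zero, Ne, List.length_eq_zero_iff]
      rintro rfl
      exact hw hL.symm
    rw [weight, if_neg hw, hset, finsum_mem_coe_finset]

theorem weight_nonneg (w : Word n) : 0 ≤ weight f w := by
  rw [weight_eq_sum_factorizations]
  exact Finset.sum_nonneg fun L _ => List.prod_nonneg fun x hx => by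
    obtain ⟨γ, -, rfl⟩ := List.mem_map.mp hx
    exact f.nonneg γ

theorem weight_eq_sum_take_drop {w : Word n} (hw : w ≠ []) :
    weight f w = ∑ k ∈ Finset.Icc 1 w.length, f.a (w.take k) * weight f (w.drop k) := by
  simp only [weight_eq_sum_factorizations, sum_factorizations_eq_sum_take_cons hw, Finset.mul_sum,
    List.map_cons, List.prod_cons]

theorem weight_pos (w : Word n) : 0 < weight f w := by
  induction w with
  | nil => simp [weight]
  | cons j t ih =>
    rw [weight_eq_sum_take_drop f (List.cons_ne_nil j t)]
    refine Finset.sum_pos' (fun k _ => mul_nonneg (f.nonneg _) (weight_nonneg f _))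
      ⟨1, by simp, ?_⟩
    simpa using mul_pos (f.pos_single j) ih

end Weight

theorem ContinuousLinearMap.finsum_mem_apply {𝕜 ι E F : Type*} [Semiring 𝕜]
    [TopologicalSpace E] [AddCommMonoid E] [Module 𝕜 E]
    [TopologicalSpace F] [AddCommMonoid F] [Module 𝕜 F] [ContinuousAdd F]
    {s : Set ι} {T : ι → E →L[𝕜] F} (hT : (s ∩ Function.support T).Finite) (x : E) :
    (∑ᶠ i ∈ s, T i) x = ∑ᶠ i ∈ s, T i x :=
  AddMonoidHom.map_finsum_mem' ⟨⟨fun S => S x, rfl⟩, fun _ _ => rfl⟩ hT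

open scoped InnerProductSpace
open ContinuousLinearMap (adjoint adjoint_inner_right)

section Fock

variable {n : ℕ}

theorem e_apply (α β : Word n) : (e α : Word n → ℂ) β = if β = α then 1 else 0 := by
  classical
  rw [e, lp.single_apply, Pi.single_apply]

theorem inner_e_left (α : Word n) (x : Fock n) : ⟪e α, x⟫_ℂ = x α := by
  classical
  simp [e, lp.inner_single_left]

theorem inner_e_right (x : Fock n) (α : Word n) : ⟪x, e α⟫_ℂ = starRingEnd ℂ (x α) := by
  rw [← inner_conj_symm, inner_e_left]

theorem ext_e {F : Type*} [AddCommMonoid F] [Module ℂ F] [TopologicalSpace F] [T2Space F]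
    {T S : Fock n →L[ℂ] F} (h : ∀ α, T (e α) = S (e α)) : T = S :=
  lp.ext_continuousLinearMap ENNReal.ofNat_ne_top fun α => ContinuousLinearMap.ext_ring (h α)

theorem adjoint_apply_apply (T : Fock n →L[ℂ] Fock n) (x : Fock n) (δ : Word n) :
    adjoint T x δ = ⟪T (e δ), x⟫_ℂ := by
  rw [← inner_e_left, adjoint_inner_right]

theorem starProjection_span_e_nil_apply_e (β : Word n) :
    (ℂ ∙ e ([] : Word n)).starProjection (e β) = if β = [] then e β else 0 := by
  rw [Submodule.starProjection_singleton, inner_e_left, e_apply]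
  rcases eq_or_ne β [] with rfl | h
  · simp [e, lp.norm_single]
  · simp [h, Ne.symm h]

end Fock

def IsWeightedShift {n : ℕ} (b : Word n → ℝ) (W : Fin n → Fock n →L[ℂ] Fock n) : Prop :=
  ∀ (j : Fin n) (α : Word n), W j (e α) = Real.sqrt (b α / b (j :: α)) • e (j :: α)

namespace IsWeightedShift

variable {n : ℕ} {b : Word n → ℝ} {W : Fin n → Fock n →L[ℂ] Fock n}

theorem opWord_apply_e (hW : IsWeightedShift b W) (hb : ∀ w, 0 < b w) (α β : Word n) :
    opWord W α (e β) = Real.sqrt (b β / b (α ++ β)) • e (α ++ β) := by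
  induction α with
  | nil => simp [opWord, div_self (hb β).ne']
  | cons j α ih =>
    have hsqrt : Real.sqrt (b β / b (α ++ β)) * Real.sqrt (b (α ++ β) / b (j :: (α ++ β))) =
        Real.sqrt (b β / b (j :: (α ++ β))) := by
      rw [← Real.sqrt_mul (div_nonneg (hb _).le (hb _).le)]
      congr 1
      field_simp [(hb (α ++ β)).ne']
    simp only [opWord, List.map_cons, List.prod_cons, mul_apply_eq_comp] at ih ⊢
    rw [ih, ContinuousLinearMap.map_smul_of_tower, hW, smul_smul, hsqrt, List.cons_append]

theorem adjoint_opWord_apply_e_append (hW : IsWeightedShift b W) (hb : ∀ w, 0 < b w)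
    (α γ : Word n) :
    adjoint (opWord W α) (e (α ++ γ)) = Real.sqrt (b γ / b (α ++ γ)) • e γ := by
  ext δ
  rw [adjoint_apply_apply, hW.opWord_apply_e hb, inner_e_right]
  rcases eq_or_ne δ γ with rfl | h
  · simp [e_apply]
  · simp [e_apply, h, Ne.symm h]

theorem adjoint_opWord_apply_e_of_not_prefix (hW : IsWeightedShift b W) (hb : ∀ w, 0 < b w)
    {α β : Word n} (h : ¬ α <+: β) :
    adjoint (opWord W α) (e β) = 0 := by
  ext δ
  rw [adjoint_apply_apply, hW.opWord_apply_e hb, inner_e_right]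
  have hβ : β ≠ α ++ δ := fun hβ => h ⟨δ, hβ.symm⟩
  simp [e_apply, hβ]

theorem opWord_mul_adjoint_apply_e_append (hW : IsWeightedShift b W) (hb : ∀ w, 0 < b w)
    (α γ : Word n) :
    (opWord W α * adjoint (opWord W α)) (e (α ++ γ)) = (b γ / b (α ++ γ)) • e (α ++ γ) := by
  rw [mul_apply_eq_comp, hW.adjoint_opWord_apply_e_append hb,
    ContinuousLinearMap.map_smul_of_tower, hW.opWord_apply_e hb, smul_smul,
    Real.mul_self_sqrt (div_nonneg (hb _).le (hb _).le)]

end IsWeightedShift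

section Identity

variable {n : ℕ} {f : NSymbol n} {W : Fin n → Fock n →L[ℂ] Fock n}

theorem sum_take_mul_weight_drop_div_weight {β : Word n} (hβ : β ≠ []) :
    ∑ k ∈ Finset.Icc 1 β.length, f.a (β.take k) * (weight f (β.drop k) / weight f β) = 1 := by
  simp_rw [mul_div_assoc']
  rw [← Finset.sum_div, ← weight_eq_sum_take_drop f hβ, div_self (weight_pos f β).ne']

theorem finsum_symbol_smul_opWord_mul_adjoint_apply_e (hW : IsWeightedShift (weight f) W)
    (β : Word n) :
    ∑ᶠ α ∈ {α : Word n | 1 ≤ α.length}, (f.a α • (opWord W α * adjoint (opWord W α))) (e β) =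
      ∑ k ∈ Finset.Icc 1 β.length, (f.a (β.take k) * (weight f (β.drop k) / weight f β)) • e β := by
  have hb := weight_pos f
  have hinj : Set.InjOn β.take (Finset.Icc 1 β.length) := fun k hk l hl hkl => by
    have := congrArg List.length hkl
    simp only [Finset.coe_Icc, Set.mem_Icc, List.length_take] at hk hl this
    omega
  rw [finsum_mem_eq_sum_of_subset _ (t := (Finset.Icc 1 β.length).image β.take),
    Finset.sum_image hinj]
  · refine Finset.sum_congr rfl fun k _ => ?_
    have h := hW.opWord_mul_adjoint_apply_e_append hb (β.take k) (β.drop k)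
    rw [List.take_append_drop] at h
    rw [smul_apply, h, smul_smul]
  · rintro α ⟨hα, hne⟩
    have hpre : α <+: β := by
      by_contra hpre
      exact hne (by simp [mul_apply_eq_comp, hW.adjoint_opWord_apply_e_of_not_prefix hb hpre])
    exact Finset.mem_image.mpr ⟨α.length, Finset.mem_Icc.mpr ⟨hα, hpre.length_le⟩,
      (List.prefix_iff_eq_take.mp hpre).symm⟩
  · intro α hα
    obtain ⟨k, hk, rfl⟩ := Finset.mem_image.mp hα
    rw [Finset.mem_Icc] at hk
    simp only [Set.mem_ofPred_eq, List.length_take]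
    omega

end Identity

theorem stmt1_general {n : ℕ} (f : NSymbol n)
    (W : Fin n → Fock n →L[ℂ] Fock n)
    (hW : ∀ (j : Fin n) (α : Word n),
      W j (e α) = Real.sqrt (weight f α / weight f (j :: α)) • e (j :: α)) :
    (∑ᶠ α ∈ {α : Word n | 1 ≤ α.length},
        f.a α • (opWord W α * ContinuousLinearMap.adjoint (opWord W α)))
      = 1 - (ℂ ∙ e ([] : Word n)).subtypeL ∘L
          (Submodule.orthogonalProjection (ℂ ∙ e ([] : Word n))) := by
  have hfin : ({α : Word n | 1 ≤ α.length} ∩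
      Function.support fun α => f.a α • (opWord W α * adjoint (opWord W α))).Finite :=
    f.finiteSupport.subset fun α hα hα0 => hα.2 (by simp [hα0])
  refine ext_e fun β => ?_
  rw [ContinuousLinearMap.finsum_mem_apply hfin,
    finsum_symbol_smul_opWord_mul_adjoint_apply_e hW, ← Finset.sum_smul, sub_apply,
    one_apply_eq_self]
  change _ = e β - (ℂ ∙ e []).starProjection (e β)
  rw [starProjection_span_e_nil_apply_e]
  rcases eq_or_ne β [] with rfl | hβ
  · simp
  · rw [sum_take_mul_weight_drop_div_weight hβ, if_neg hβ, one_smul, sub_zero]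

/-- `Σ_{|α| ≥ 1} a_α W_α^f (W_α^f)* = 1 − P_∅`, where `P_∅` is the
orthogonal projection onto the span of the vacuum vector `e_∅`. -/
theorem stmt1 {n : ℕ} (hn : 1 ≤ n) (f : NSymbol n)
    (W : Fin n → Fock n →L[ℂ] Fock n)
    (hW : ∀ (j : Fin n) (α : Word n),
      W j (e α) = Real.sqrt (weight f α / weight f (j :: α)) • e (j :: α)) :
    (∑ᶠ α ∈ {α : Word n | 1 ≤ α.length},
        f.a α • (opWord W α * ContinuousLinearMap.adjoint (opWord W α)))
      = 1 - (ℂ ∙ e ([] : Word n)).subtypeL ∘L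
          (Submodule.orthogonalProjection (ℂ ∙ e ([] : Word n))) :=
  stmt1_general f W hW
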